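/- arXiv:2603.16779 — 9 statements merged into one kernel-verified Lean document; each statement's English description precedes it below -/
import Mathlib

section
/- Let A be a finite-dimensional commutative normed ℂ-algebra with identity whose norm is submultiplicative, let N ≥ 1, and let c : (Fin N → ℕ) → A be a family of coefficients. Suppose there is r > 0 such that for every Z : Fin N → A with ‖Z i‖ < r for all i, the family α ↦ c α * ∏ i, (Z i)^(α i) is summable and its sum equals 0. Then c α = 0 for every multi-index α. -/
/-!
On the scalar line `ℂ • 1 ⊆ A` the series becomes an ordinary power series in `N` complex
variables with coefficients in `A`, so it suffices to prove the identity theorem for those, by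
induction on `N`. Splitting off the first variable, summability at a point with nonzero first
coordinate makes every slice summable; summing fibrewise gives a one-variable series vanishing
on a disc, whose coefficients (the sums of the slices) vanish by the one-variable identity
theorem, and the induction hypothesis applies to each slice.
-/

open scoped ENNReal

section

variable {𝕜 E : Type*} [NontriviallyNormedField 𝕜] [NormedAddCommGroup E] [NormedSpace 𝕜 E]

theorem eq_zero_of_hasSum_pow_smul_eq_zero {a : ℕ → E} {r : ℝ} (hr : 0 < r)
    (h : ∀ z : 𝕜, ‖z‖ < r → HasSum (fun n => z ^ n • a n) 0) : a = 0 := by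
  let p : FormalMultilinearSeries 𝕜 𝕜 E := fun n =>
    ContinuousMultilinearMap.mkPiRing 𝕜 (Fin n) (a n)
  have hp : ∀ n z, (p n fun _ => z) = z ^ n • a n := by simp [p]
  obtain ⟨z₀, hz₀, hz₀r⟩ := NormedField.exists_norm_lt 𝕜 hr
  have hrad : (‖z₀‖₊ : ℝ≥0∞) ≤ p.radius := by
    refine p.le_radius_of_tendsto (l := 0) ?_
    simpa [p, norm_smul, mul_comm] using (h z₀ hz₀r).summable.tendsto_atTop_zero.norm
  have hball : HasFPowerSeriesOnBall 0 p 0 ‖z₀‖₊ := by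
    refine ⟨hrad, by simpa using hz₀, fun {y} hy => ?_⟩
    have hy : ‖y‖ < ‖z₀‖ := by simpa using hy
    simpa [hp] using h y (hy.trans hz₀r)
  funext n
  simpa [hp] using congr($(hball.hasFPowerSeriesAt.eq_zero) n fun _ => 1)

theorem hasSum_prod_pow_smul_fin_succ_iff {N : ℕ} {a : (Fin (N + 1) → ℕ) → E} {z₀ : 𝕜}
    {w : Fin N → 𝕜} {s : E} :
    HasSum (fun α => (∏ i, Fin.cons (α := fun _ => 𝕜) z₀ w i ^ α i) • a α) s ↔
      HasSum (fun q : ℕ × (Fin N → ℕ) =>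
        z₀ ^ q.1 • (∏ i, w i ^ q.2 i) • a (Fin.cons q.1 q.2)) s := by
  rw [← (Fin.consEquiv fun _ => ℕ).hasSum_iff]
  simp [Fin.consEquiv, Fin.prod_univ_succ, mul_smul, Function.comp_def]

theorem eq_zero_of_hasSum_prod_pow_smul_eq_zero [CompleteSpace E] {N : ℕ}
    {a : (Fin N → ℕ) → E} {r : ℝ} (hr : 0 < r)
    (h : ∀ z : Fin N → 𝕜, (∀ i, ‖z i‖ < r) → HasSum (fun α => (∏ i, z i ^ α i) • a α) 0) :
    a = 0 := by
  induction N with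
  | zero =>
    funext α
    simpa using (hasSum_single α fun β hβ => (hβ (Subsingleton.elim β α)).elim).unique
      (h Fin.elim0 fun i => i.elim0)
  | succ N ih =>
    have hcons : ∀ z₀ : 𝕜, ‖z₀‖ < r → ∀ w : Fin N → 𝕜, (∀ i, ‖w i‖ < r) →
        HasSum (fun q : ℕ × (Fin N → ℕ) =>
          z₀ ^ q.1 • (∏ i, w i ^ q.2 i) • a (Fin.cons q.1 q.2)) 0 := by
      intro z₀ hz₀ w hw
      refine hasSum_prod_pow_smul_fin_succ_iff.mp (h _ fun i => ?_)
      cases i using Fin.cases <;> simp [hz₀, hw]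
    obtain ⟨z₀, hz₀, hz₀r⟩ := NormedField.exists_norm_lt 𝕜 hr
    have hslice : ∀ w : Fin N → 𝕜, (∀ i, ‖w i‖ < r) → ∀ k : ℕ,
        Summable fun β : Fin N → ℕ => (∏ i, w i ^ β i) • a (Fin.cons k β) := by
      intro w hw k
      have hz₀k : z₀ ^ k ≠ 0 := pow_ne_zero k (norm_pos_iff.mp hz₀)
      simpa only [inv_smul_smul₀ hz₀k] using
        ((hcons z₀ hz₀r w hw).summable.prod_factor k).const_smul (z₀ ^ k)⁻¹
    have hfiber : ∀ w : Fin N → 𝕜, (∀ i, ‖w i‖ < r) → ∀ k : ℕ,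
        ∑' β : Fin N → ℕ, (∏ i, w i ^ β i) • a (Fin.cons k β) = 0 := by
      intro w hw
      refine congrFun (eq_zero_of_hasSum_pow_smul_eq_zero (𝕜 := 𝕜) hr fun ζ hζ => ?_)
      exact (hcons ζ hζ w hw).prod_fiberwise fun k => ((hslice w hw k).hasSum).const_smul _
    funext α
    rw [← Fin.cons_self_tail α]
    refine congrFun (ih (a := fun β => a (Fin.cons (α 0) β)) fun w hw => ?_) (Fin.tail α)
    exact (hslice w hw (α 0)).hasSum_iff.mpr (hfiber w hw (α 0))

end

theorem stmt0_general {A : Type*} [NormedCommRing A] [NormedAlgebra ℂ A]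
    [FiniteDimensional ℂ A] (N : ℕ)
    (c : (Fin N → ℕ) → A)
    (h : ∃ r > (0 : ℝ), ∀ Z : Fin N → A, (∀ i, ‖Z i‖ < r) →
      Summable (fun α : Fin N → ℕ => c α * ∏ i, (Z i) ^ (α i)) ∧
      ∑' α : Fin N → ℕ, c α * ∏ i, (Z i) ^ (α i) = 0) :
    ∀ α : Fin N → ℕ, c α = 0 := by
  have : CompleteSpace A := FiniteDimensional.complete ℂ A
  obtain ⟨r, hr, h⟩ := h
  obtain ⟨δ, hδ, hδr⟩ :=
    Metric.continuousAt_iff.mp ((continuous_algebraMap ℂ A).continuousAt (x := 0)) r hr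
  refine congrFun (eq_zero_of_hasSum_prod_pow_smul_eq_zero (𝕜 := ℂ) hδ fun z hz => ?_)
  have hZ : ∀ i, ‖algebraMap ℂ A (z i)‖ < r := fun i => by
    simpa using hδr (x := z i) (by simpa only [dist_zero_right] using hz i)
  obtain ⟨hsum, hzero⟩ := h _ hZ
  have hterm : ∀ α : Fin N → ℕ,
      (∏ i, z i ^ α i) • c α = c α * ∏ i, algebraMap ℂ A (z i) ^ α i := fun α => by
    simp only [Algebra.smul_def, map_prod, map_pow, mul_comm]
  simpa only [hterm, hzero] using hsum.hasSum

/-- identity theorem for power series with coefficients in a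
finite-dimensional commutative normed ℂ-algebra: if a power series in `N`
algebraic variables converges in a polydisk around the origin and its sum is
identically zero there, then all its coefficients vanish. -/
theorem stmt0 {A : Type*} [NormedCommRing A] [NormedAlgebra ℂ A]
    [FiniteDimensional ℂ A] (N : ℕ) (hN : 1 ≤ N)
    (c : (Fin N → ℕ) → A)
    (h : ∃ r > (0 : ℝ), ∀ Z : Fin N → A, (∀ i, ‖Z i‖ < r) →
      Summable (fun α : Fin N → ℕ => c α * ∏ i, (Z i) ^ (α i)) ∧
      ∑' α : Fin N → ℕ, c α * ∏ i, (Z i) ^ (α i) = 0) :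
    ∀ α : Fin N → ℕ, c α = 0 :=
  stmt0_general N c h
end

section
/- Let S be a finite-dimensional commutative associative ℝ-algebra with identity. Then there exist finitely many proper ℝ-linear subspaces V₁, …, V_m of S such that an element x ∈ S is non-invertible if and only if x belongs to some V_j. In particular the set of non-invertible elements of S is a finite union of linear subspaces of positive codimension. -/
/-!
A finite-dimensional algebra over a field is an Artinian ring, so it has only finitely many
maximal ideals. An element of a commutative ring is a nonunit exactly when it lies in some
maximal ideal, and a maximal ideal, viewed as a subspace over the base field, is proper.
-/

theorem not_isUnit_iff_exists_mem_maximalSpectrum {A : Type*} [CommSemiring A] {x : A} :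
    ¬IsUnit x ↔ ∃ P : MaximalSpectrum A, x ∈ P.asIdeal := by
  constructor
  · intro hx
    obtain ⟨I, hI, hxI⟩ := exists_max_ideal_of_mem_nonunits hx
    exact ⟨⟨I, hI⟩, hxI⟩
  · rintro ⟨P, hxP⟩ hx
    exact P.isMaximal.ne_top (Ideal.eq_top_of_isUnit_mem _ hxP hx)

section

variable (R : Type*) {A : Type*} [Semiring R] [CommSemiring A] [Module R A]
  [IsScalarTower R A A]

theorem MaximalSpectrum.restrictScalars_asIdeal_ne_top (P : MaximalSpectrum A) :
    P.asIdeal.restrictScalars R ≠ ⊤ := by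
  rw [Ne, Submodule.restrictScalars_eq_top_iff]
  exact P.isMaximal.ne_top

theorem exists_fin_submodules_ne_top_not_isUnit_iff [Finite (MaximalSpectrum A)] :
    ∃ (m : ℕ) (V : Fin m → Submodule R A),
      (∀ j, V j ≠ ⊤) ∧ (∀ x : A, ¬IsUnit x ↔ ∃ j, x ∈ V j) := by
  let e := Finite.equivFin (MaximalSpectrum A)
  refine ⟨_, fun j => (e.symm j).asIdeal.restrictScalars R,
    fun j => (e.symm j).restrictScalars_asIdeal_ne_top R, fun x => ?_⟩
  rw [not_isUnit_iff_exists_mem_maximalSpectrum, ← e.symm.exists_congr_right]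
  rfl

end

/-- in a finite-dimensional commutative associative unital
ℝ-algebra, the set of non-invertible elements is a finite union of proper
ℝ-linear subspaces (hence of positive codimension). -/
theorem stmt1 (S : Type*) [CommRing S] [Algebra ℝ S] [FiniteDimensional ℝ S] :
    ∃ (m : ℕ) (V : Fin m → Submodule ℝ S),
      (∀ j, V j ≠ ⊤) ∧ (∀ x : S, ¬ IsUnit x ↔ ∃ j, x ∈ V j) := by
  have : IsArtinianRing S := .of_finite ℝ S
  exact exists_fin_submodules_ne_top_not_isUnit_iff ℝ
end

section
/- Let E and F be finite-dimensional real normed vector spaces, m ≥ 1, let ψ : E → F be m-times continuously differentiable (ContDiff ℝ m ψ), and let T ⊆ E be a set whose interior is nonempty. If for every u ∈ E and every v ∈ T the m-th derivative of ψ evaluated m times in the direction v vanishes, i.e. iteratedFDeriv ℝ m ψ u (fun _ => v) = 0, then the m-th derivative of ψ vanishes identically: iteratedFDeriv ℝ m ψ u = 0 for all u ∈ E. -/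
/-!
The `m`-th derivative `P = D^m ψ(u)` of a `C^m` map is a symmetric multilinear map: adjacent
transpositions generate the symmetric group, the one swapping the first two slots is the symmetry
of a second derivative, and the others are handled by induction on `m`. The diagonal
`v ↦ P (v, …, v)` vanishes on the open set `interior T`, so its `m`-th derivative vanishes there;
but for a symmetric `P` that derivative is `∑_σ P ∘ σ = m! • P`, hence `P = 0`.
-/

open Equiv Function Filter Topology

theorem comp_perm_eq_of_comp_swap_castSucc_succ {α β : Type*} {n : ℕ}
    (g : (Fin (n + 1) → α) → β)
    (h : ∀ (i : Fin n) (v : Fin (n + 1) → α), g (v ∘ swap i.castSucc i.succ) = g v)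
    (σ : Perm (Fin (n + 1))) (v : Fin (n + 1) → α) : g (v ∘ σ) = g v := by
  have hσ : σ ∈ Submonoid.closure (Set.range fun i : Fin n ↦ swap i.castSucc i.succ) :=
    Perm.mclosure_swap_castSucc_succ n ▸ Submonoid.mem_top σ
  induction hσ using Submonoid.closure_induction generalizing v with
  | mem τ hτ => obtain ⟨i, rfl⟩ := hτ; exact h i v
  | one => rfl
  | mul σ τ _ _ hσ hτ => rw [Perm.coe_mul, ← comp_assoc, hτ, hσ]

section

variable {𝕜 : Type*} [RCLike 𝕜] {E F : Type*} [NormedAddCommGroup E] [NormedSpace 𝕜 E]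
  [NormedAddCommGroup F] [NormedSpace 𝕜 F] {ψ : E → F}

theorem ContDiff.contDiff_iteratedFDeriv_apply {n : ℕ} (hψ : ContDiff 𝕜 (n + 2) ψ)
    (c : Fin n → E) : ContDiff 𝕜 2 fun y ↦ iteratedFDeriv 𝕜 n ψ y c :=
  (ContinuousMultilinearMap.apply 𝕜 _ F c).contDiff.comp
    (hψ.iteratedFDeriv_right (by exact_mod_cast (Nat.add_comm 2 n).le))

theorem ContDiff.iteratedFDeriv_add_two_apply {n : ℕ} (hψ : ContDiff 𝕜 (n + 2) ψ) (x : E)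
    (w : Fin (n + 2) → E) :
    iteratedFDeriv 𝕜 (n + 2) ψ x w =
      fderiv 𝕜 (fderiv 𝕜 fun y ↦ iteratedFDeriv 𝕜 n ψ y (Fin.tail (Fin.tail w))) x (w 0) (w 1) := by
  have hdiff : ∀ k < n + 2, Differentiable 𝕜 (iteratedFDeriv 𝕜 k ψ) := fun k hk ↦
    hψ.differentiable_iteratedFDeriv (by exact_mod_cast hk)
  have hinner : (fun y ↦ iteratedFDeriv 𝕜 (n + 1) ψ y (Fin.tail w)) =
      fun y ↦ fderiv 𝕜 (fun z ↦ iteratedFDeriv 𝕜 n ψ z (Fin.tail (Fin.tail w))) y (w 1) :=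
    funext fun y ↦ (hdiff n (by omega) y).iteratedFDeriv_succ_apply_left'
  have hsnd : Differentiable 𝕜 (fderiv 𝕜 fun y ↦ iteratedFDeriv 𝕜 n ψ y (Fin.tail (Fin.tail w))) :=
    ((hψ.contDiff_iteratedFDeriv_apply _).fderiv_right le_rfl).differentiable one_ne_zero
  rw [(hdiff (n + 1) (by omega) x).iteratedFDeriv_succ_apply_left', hinner,
    fderiv_clm_apply (hsnd x) (differentiableAt_const _)]
  simp

theorem ContDiff.iteratedFDeriv_comp_swap_zero_one {n : ℕ} (hψ : ContDiff 𝕜 (n + 2) ψ) (x : E)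
    (w : Fin (n + 2) → E) :
    iteratedFDeriv 𝕜 (n + 2) ψ x (w ∘ swap 0 1) = iteratedFDeriv 𝕜 (n + 2) ψ x w := by
  have htail : Fin.tail (Fin.tail (w ∘ swap 0 1)) = Fin.tail (Fin.tail w) := by
    funext i
    exact congrArg w (swap_apply_of_ne_of_ne (Fin.succ_ne_zero _) (by simp [Fin.ext_iff]))
  rw [hψ.iteratedFDeriv_add_two_apply, hψ.iteratedFDeriv_add_two_apply, htail]
  simpa using (hψ.contDiff_iteratedFDeriv_apply _).contDiffAt.isSymmSndFDerivAt (by simp)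
    (w 1) (w 0)

theorem ContDiff.iteratedFDeriv_comp_perm {n : ℕ} (hψ : ContDiff 𝕜 n ψ) (x : E)
    (v : Fin n → E) (σ : Perm (Fin n)) :
    iteratedFDeriv 𝕜 n ψ x (v ∘ σ) = iteratedFDeriv 𝕜 n ψ x v := by
  induction n generalizing x with
  | zero => exact congrArg _ (Subsingleton.elim _ _)
  | succ n ih =>
    refine comp_perm_eq_of_comp_swap_castSucc_succ _ (fun i w ↦ ?_) σ v
    rcases n with _ | n
    · exact i.elim0
    induction i using Fin.cases with
    | zero => simpa using hψ.iteratedFDeriv_comp_swap_zero_one x w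
    | succ j =>
      have hdiff : Differentiable 𝕜 (iteratedFDeriv 𝕜 (n + 1) ψ) :=
        hψ.differentiable_iteratedFDeriv (by exact_mod_cast Nat.lt_succ_self _)
      have htail : Fin.tail (w ∘ swap j.succ.castSucc j.succ.succ) =
          Fin.tail w ∘ swap j.castSucc j.succ := by
        funext i
        simp only [Fin.tail, comp_apply, ← Fin.succ_castSucc,
          (Fin.succ_injective _).swap_apply]
      have hhead : (w ∘ swap j.succ.castSucc j.succ.succ) 0 = w 0 := by
        rw [← Fin.succ_castSucc]
        exact congrArg w (swap_apply_of_ne_of_ne (Fin.succ_ne_zero _).symm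
          (Fin.succ_ne_zero _).symm)
      rw [(hdiff x).iteratedFDeriv_succ_apply_left', (hdiff x).iteratedFDeriv_succ_apply_left',
        htail, hhead]
      simp_rw [ih hψ.of_succ]

theorem ContinuousMultilinearMap.eq_zero_of_comp_perm_of_eventually_diagonal_eq_zero {n : ℕ}
    (f : E [×n]→L[𝕜] F) (hsymm : ∀ (v : Fin n → E) (σ : Perm (Fin n)), f (v ∘ σ) = f v)
    {x₀ : E} (hdiag : ∀ᶠ x in 𝓝 x₀, f (fun _ ↦ x) = 0) : f = 0 := by
  ext v
  have hzero : iteratedFDeriv 𝕜 n (fun x ↦ f fun _ ↦ x) x₀ = 0 := by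
    rw [(Filter.EventuallyEq.iteratedFDeriv 𝕜 (f₂ := fun _ ↦ 0) hdiag n).eq_of_nhds,
      iteratedFDeriv_fun_zero, Pi.zero_apply]
  have hsum : iteratedFDeriv 𝕜 n (fun x ↦ f fun _ ↦ x) x₀ v = (n.factorial : 𝕜) • f v := by
    rw [f.iteratedFDeriv_comp_diagonal, Nat.cast_smul_eq_nsmul]
    simp_rw [← comp_apply (f := v), hsymm]
    simp [Fintype.card_perm]
  rw [hzero, zero_apply, eq_comm, smul_eq_zero] at hsum
  exact hsum.resolve_left (by exact_mod_cast n.factorial_ne_zero)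

end

theorem stmt8_general {E F : Type*}
    [NormedAddCommGroup E] [NormedSpace ℝ E]
    [NormedAddCommGroup F] [NormedSpace ℝ F]
    (m : ℕ) (ψ : E → F) (hψ : ContDiff ℝ m ψ)
    (T : Set E) (hT : (interior T).Nonempty)
    (h : ∀ (u : E), ∀ v ∈ T, iteratedFDeriv ℝ m ψ u (fun _ => v) = 0) :
    ∀ u : E, iteratedFDeriv ℝ m ψ u = 0 := by
  obtain ⟨v₀, hv₀⟩ := hT
  intro u
  refine (iteratedFDeriv ℝ m ψ u).eq_zero_of_comp_perm_of_eventually_diagonal_eq_zero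
    (hψ.iteratedFDeriv_comp_perm u) (x₀ := v₀) ?_
  filter_upwards [isOpen_interior.mem_nhds hv₀] with v hv
  exact h u v (interior_subset hv)

/-- Lemma 12 of the paper: if `ψ` is `C^m` between
finite-dimensional real normed spaces and its `m`-th derivative, evaluated `m`
times in a fixed direction `v`, vanishes for all `u` and all `v` in a set `T`
with nonempty interior, then the `m`-th derivative vanishes identically. -/
theorem stmt8 {E F : Type*}
    [NormedAddCommGroup E] [NormedSpace ℝ E] [FiniteDimensional ℝ E]
    [NormedAddCommGroup F] [NormedSpace ℝ F] [FiniteDimensional ℝ F]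
    (m : ℕ) (hm : 1 ≤ m) (ψ : E → F) (hψ : ContDiff ℝ m ψ)
    (T : Set E) (hT : (interior T).Nonempty)
    (h : ∀ (u : E), ∀ v ∈ T, iteratedFDeriv ℝ m ψ u (fun _ => v) = 0) :
    ∀ u : E, iteratedFDeriv ℝ m ψ u = 0 :=
  stmt8_general m ψ hψ T hT h
end

section
/- Let E and F be real normed vector spaces, m ≥ 1, and let M be a continuous symmetric m-multilinear map from E^m to F (i.e. M : ContinuousMultilinearMap ℝ (fun _ : Fin m => E) F with M invariant under every permutation of its arguments). If there is a nonempty open set U ⊆ E such that M(v, v, …, v) = 0 for every v ∈ U, then M = 0. -/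
/-!
The `m`-th derivative of the diagonal `x ↦ M (x, …, x)` at any point is the symmetrization
`v ↦ ∑ σ, M (v ∘ σ)`, which is `m! • M` when `M` is symmetric. If the diagonal vanishes near
a point, this derivative vanishes there, hence so does `M`.
-/

open Equiv Filter Topology

namespace ContinuousMultilinearMap

variable {𝕜 E F : Type*} [NontriviallyNormedField 𝕜]
  [NormedAddCommGroup E] [NormedSpace 𝕜 E] [NormedAddCommGroup F] [NormedSpace 𝕜 F]

theorem sum_perm_eq_zero_of_diagonal_eventuallyEq_zero {n : ℕ} (f : E [×n]→L[𝕜] F) {x : E}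
    (hf : (fun y ↦ f (fun _ ↦ y)) =ᶠ[𝓝 x] 0) (v : Fin n → E) :
    ∑ σ : Perm (Fin n), f (v ∘ σ) = 0 := by
  change ∑ σ : Perm (Fin n), f (fun i ↦ v (σ i)) = 0
  rw [← f.iteratedFDeriv_comp_diagonal x v, (hf.iteratedFDeriv 𝕜 n).eq_of_nhds]
  simp

theorem sum_perm_eq_factorial_smul {n : ℕ} (f : E [×n]→L[𝕜] F)
    (hf : ∀ (v : Fin n → E) (σ : Perm (Fin n)), f (v ∘ σ) = f v) (v : Fin n → E) :
    ∑ σ : Perm (Fin n), f (v ∘ σ) = n.factorial • f v := by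
  simp only [hf, Finset.sum_const, Finset.card_univ, Fintype.card_perm, Fintype.card_fin]

theorem eq_zero_of_symmetric_of_diagonal_eventuallyEq_zero [CharZero 𝕜] {n : ℕ}
    (f : E [×n]→L[𝕜] F) (hsymm : ∀ (v : Fin n → E) (σ : Perm (Fin n)), f (v ∘ σ) = f v)
    {x : E} (hf : (fun y ↦ f (fun _ ↦ y)) =ᶠ[𝓝 x] 0) : f = 0 := by
  ext v
  have h := f.sum_perm_eq_zero_of_diagonal_eventuallyEq_zero hf v
  rw [f.sum_perm_eq_factorial_smul hsymm, ← Nat.cast_smul_eq_nsmul 𝕜] at h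
  exact (smul_eq_zero.1 h).resolve_left (Nat.cast_ne_zero.2 n.factorial_ne_zero)

end ContinuousMultilinearMap

theorem stmt9_general {E F : Type*}
    [NormedAddCommGroup E] [NormedSpace ℝ E]
    [NormedAddCommGroup F] [NormedSpace ℝ F]
    (m : ℕ)
    (M : ContinuousMultilinearMap ℝ (fun _ : Fin m => E) F)
    (hsymm : ∀ (v : Fin m → E) (σ : Equiv.Perm (Fin m)), M (v ∘ σ) = M v)
    (U : Set E) (hU : IsOpen U) (hUne : U.Nonempty)
    (hdiag : ∀ v ∈ U, M (fun _ => v) = 0) :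
    M = 0 := by
  obtain ⟨u, hu⟩ := hUne
  exact M.eq_zero_of_symmetric_of_diagonal_eventuallyEq_zero hsymm
    (eventually_of_mem (hU.mem_nhds hu) hdiag)

/-- polarization: a continuous symmetric `m`-multilinear map
vanishing on the diagonal over a nonempty open set vanishes identically. -/
theorem stmt9 {E F : Type*}
    [NormedAddCommGroup E] [NormedSpace ℝ E]
    [NormedAddCommGroup F] [NormedSpace ℝ F]
    (m : ℕ) (hm : 1 ≤ m)
    (M : ContinuousMultilinearMap ℝ (fun _ : Fin m => E) F)
    (hsymm : ∀ (v : Fin m → E) (σ : Equiv.Perm (Fin m)), M (v ∘ σ) = M v)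
    (U : Set E) (hU : IsOpen U) (hUne : U.Nonempty)
    (hdiag : ∀ v ∈ U, M (fun _ => v) = 0) :
    M = 0 :=
  stmt9_general m M hsymm U hU hUne hdiag
end

section
/- Let S be a commutative associative ℝ-algebra with identity, A = ℂ ⊗[ℝ] S its complexification, σ the conjugation on A, and i = Complex.I ⊗ 1. Let P ∈ A and let Q₀ ∈ A be real (σ(Q₀) = Q₀). If (Z, W) ∈ A × A satisfies W - σ(W) = 2 i * (Z * σ(Z)), then the point (Z', W') with Z' = Z + P and W' = W + 2 i * σ(P) * Z + (Q₀ + i * P * σ(P)) satisfies W' - σ(W') = 2 i * (Z' * σ(Z')). Hence the translation-type maps preserve the algebraized quadric Q. -/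
open TensorProduct

/-- The conjugation `σ` on the complexification `A = ℂ ⊗[ℝ] S`, induced by
complex conjugation on the first tensor factor. -/
noncomputable def conjA (S : Type*) [CommRing S] [Algebra ℝ S] :
    (ℂ ⊗[ℝ] S) →ₐ[ℝ] (ℂ ⊗[ℝ] S) :=
  Algebra.TensorProduct.map Complex.conjAe.toAlgHom (AlgHom.id ℝ S)

/-- The element `i = Complex.I ⊗ 1` of the complexification. -/
noncomputable def iA (S : Type*) [CommRing S] [Algebra ℝ S] : ℂ ⊗[ℝ] S :=
  Complex.I ⊗ₜ[ℝ] (1 : S)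

lemma conjA_iA (S : Type*) [CommRing S] [Algebra ℝ S] :
    conjA S (iA S) = - iA S := by
  simp [conjA, iA, Algebra.TensorProduct.map_tmul, TensorProduct.neg_tmul]

lemma conjA_conjA (S : Type*) [CommRing S] [Algebra ℝ S] (x : ℂ ⊗[ℝ] S) :
    conjA S (conjA S x) = x := by
  induction x using TensorProduct.induction_on with
  | zero => simp
  | tmul a b => simp [conjA, Algebra.TensorProduct.map_tmul]
  | add x y hx hy => simp [map_add, hx, hy]

/-- the translation-type maps
`Z' = Z + P`, `W' = W + 2 i σ(P) Z + (Q₀ + i P σ(P))` (with `Q₀` real)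
preserve the algebraized quadric `Im W = Z σ(Z)`. -/
theorem stmt10 (S : Type*) [CommRing S] [Algebra ℝ S]
    (P Q₀ Z W : ℂ ⊗[ℝ] S) (hQ₀ : conjA S Q₀ = Q₀)
    (hZW : W - conjA S W = 2 * iA S * (Z * conjA S Z)) :
    (W + 2 * iA S * conjA S P * Z + (Q₀ + iA S * P * conjA S P)) -
      conjA S (W + 2 * iA S * conjA S P * Z + (Q₀ + iA S * P * conjA S P)) =
      2 * iA S * ((Z + P) * conjA S (Z + P)) := by
  simp only [map_add, map_mul, map_sub, map_ofNat, conjA_conjA, conjA_iA, hQ₀]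
  linear_combination hZW
end

section
/- Let S be a commutative associative ℝ-algebra with identity, A = ℂ ⊗[ℝ] S its complexification, σ the conjugation on A, and i = Complex.I ⊗ 1. Let R ∈ A be real (σ(R) = R), let A₀ ∈ A, and let (Z, W) ∈ A × A satisfy W - σ(W) = 2 i * (Z * σ(Z)). Set D := 1 - 2 i * σ(A₀) * Z - (R + i * A₀ * σ(A₀)) * W. If D is invertible in A, then the point (Z', W') with Z' = D⁻¹ * (Z + A₀ * W) and W' = D⁻¹ * W again satisfies W' - σ(W') = 2 i * (Z' * σ(Z')). Hence the fractional-linear maps of this form preserve the algebraized quadric Q. -/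
open TensorProduct
set_option maxHeartbeats 1000000

lemma ring_aux {A : Type*} [CommRing A] (i z w a u v cz cw d cd conj_a : A)
    (key : cd * w - d * cw = 2 * i * ((z + a * w) * (cz + conj_a * cw)))
    (h1 : cd * v = 1) (h2 : d * u = 1) :
    u * w - v * cw = 2 * i * ((u * (z + a * w)) * (v * (cz + conj_a * cw))) := by
  linear_combination (u * v) * key - (u * w) * h1 + (v * cw) * h2

/-- the fractional-linear maps
`Z' = D⁻¹ (Z + A₀ W)`, `W' = D⁻¹ W`, with `R` real and
`D = 1 - 2 i σ(A₀) Z - (R + i A₀ σ(A₀)) W` invertible, preserve the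
algebraized quadric `Im W = Z σ(Z)`. -/
theorem stmt12 (S : Type*) [CommRing S] [Algebra ℝ S]
    (R A₀ Z W : ℂ ⊗[ℝ] S) (hR : conjA S R = R)
    (hZW : W - conjA S W = 2 * iA S * (Z * conjA S Z))
    (D : ℂ ⊗[ℝ] S)
    (hD : D = 1 - 2 * iA S * conjA S A₀ * Z - (R + iA S * A₀ * conjA S A₀) * W)
    (Dinv : ℂ ⊗[ℝ] S) (hDinv : D * Dinv = 1) :
    (Dinv * W) - conjA S (Dinv * W) =
      2 * iA S * ((Dinv * (Z + A₀ * W)) * conjA S (Dinv * (Z + A₀ * W))) := by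
  have hσD : conjA S D =
      1 + 2 * iA S * A₀ * conjA S Z - (R - iA S * conjA S A₀ * A₀) * conjA S W := by
    rw [hD]
    simp only [map_sub, map_add, map_mul, map_one, map_ofNat, conjA_iA, hR, conjA_conjA]
    ring
  have key : conjA S D * W - D * conjA S W =
      2 * iA S * ((Z + A₀ * W) * (conjA S Z + conjA S A₀ * conjA S W)) := by
    rw [hσD, hD]
    linear_combination hZW
  have h1 : conjA S D * conjA S Dinv = 1 := by
    rw [← map_mul, hDinv, map_one]
  simp only [map_mul, map_add]
  exact ring_aux (iA S) Z W A₀ Dinv (conjA S Dinv) (conjA S Z) (conjA S W) D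
    (conjA S D) (conj_a := conjA S A₀) key h1 hDinv
end

section
/- Let S be a commutative associative ℝ-algebra with identity, A = ℂ ⊗[ℝ] S its complexification, σ the conjugation on A, and i = Complex.I ⊗ 1. Let (Z, W) ∈ A × A satisfy W - σ(W) = 2 i * (Z * σ(Z)), and suppose W is invertible in A. Then the point (Z', W') with Z' = Z * W⁻¹ and W' = -W⁻¹ again satisfies W' - σ(W') = 2 i * (Z' * σ(Z')). Hence the projective inversion (z ↦ z/w, w ↦ -1/w) is preserved under algebraization: it maps the algebraized hyperquadric to itself wherever W is invertible. -/
open TensorProduct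

/-- the projective inversion `(Z, W) ↦ (Z W⁻¹, -W⁻¹)`
preserves the algebraized quadric `Im W = Z σ(Z)` wherever `W` is
invertible. -/
theorem stmt13 (S : Type*) [CommRing S] [Algebra ℝ S]
    (Z W : ℂ ⊗[ℝ] S)
    (hZW : W - conjA S W = 2 * iA S * (Z * conjA S Z))
    (Winv : ℂ ⊗[ℝ] S) (hWinv : W * Winv = 1) :
    (-Winv) - conjA S (-Winv) =
      2 * iA S * ((Z * Winv) * conjA S (Z * Winv)) := by
  have h1 : conjA S W * conjA S Winv = 1 := by
    rw [← map_mul, hWinv, map_one]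
  simp only [map_neg, map_mul]
  linear_combination (Winv * conjA S Winv) * hZW - conjA S Winv * hWinv + Winv * h1
end

section
/- Let M ⊆ ℂ⁴ be the set of points (z₁, z₂, w₁, w₂) satisfying Im w₁ = (z₁ * conj z₁)² (i.e. Im w₁ = |z₁|⁴) and Im w₂ = 4 * Re(z₁² * conj z₁ * conj z₂). Then for every nonzero real λ the map (z₁, z₂, w₁, w₂) ↦ (z₁, λ • z₂, w₁, λ • w₂) maps M bijectively onto M. This gives a one-parameter group of holomorphic automorphisms of M (of weight zero) that are not of the algebraized (S-holomorphic) form. -/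
open Complex

/-- The algebraization (over the dual numbers) of the quartic model surface
`Im w = z² z̄²`, written in coordinates of `ℂ⁴`:
`Im w₁ = (z₁ z̄₁)²` and `Im w₂ = 4 Re(z₁² z̄₁ z̄₂)`. -/
def quarticDual : Set (ℂ × ℂ × ℂ × ℂ) :=
  {p | p.2.2.1.im = ((p.1 * (starRingEnd ℂ) p.1) ^ 2).re ∧
       p.2.2.2.im = 4 * (p.1 ^ 2 * (starRingEnd ℂ) p.1 * (starRingEnd ℂ) p.2.1).re}

lemma mapsToAux (lam : ℝ) :
    Set.MapsTo (fun p : ℂ × ℂ × ℂ × ℂ =>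
        (p.1, lam • p.2.1, p.2.2.1, lam • p.2.2.2))
      quarticDual quarticDual := by
  rintro ⟨z1, z2, w1, w2⟩ ⟨h1, h2⟩
  refine ⟨h1, ?_⟩
  simp only [quarticDual, Set.mem_setOf_eq] at *
  rw [smul_im, h2]
  have : (starRingEnd ℂ) (lam • z2) = lam • (starRingEnd ℂ) z2 := by
    simp [Complex.ext_iff]
  rw [this]
  have h3 : z1 ^ 2 * (starRingEnd ℂ) z1 * (lam • (starRingEnd ℂ) z2)
      = (lam : ℂ) * (z1 ^ 2 * (starRingEnd ℂ) z1 * (starRingEnd ℂ) z2) := by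
    rw [Complex.real_smul]; ring
  rw [h3, Complex.re_ofReal_mul]
  simp only [smul_eq_mul]
  ring

/-- Statement 15 of the paper: for every nonzero real `λ`,
the map `(z₁, z₂, w₁, w₂) ↦ (z₁, λ z₂, w₁, λ w₂)` is a bijection of the
algebraized quartic model surface onto itself — a one-parameter group of
holomorphic automorphisms not of the algebraized (S-holomorphic) form. -/
theorem stmt18 :
    ∀ lam : ℝ, lam ≠ 0 →
      Set.BijOn (fun p : ℂ × ℂ × ℂ × ℂ =>
          (p.1, lam • p.2.1, p.2.2.1, lam • p.2.2.2))
        quarticDual quarticDual := by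
  intro lam hlam
  have hinv : Set.InvOn
      (fun p : ℂ × ℂ × ℂ × ℂ => (p.1, lam⁻¹ • p.2.1, p.2.2.1, lam⁻¹ • p.2.2.2))
      (fun p : ℂ × ℂ × ℂ × ℂ => (p.1, lam • p.2.1, p.2.2.1, lam • p.2.2.2))
      quarticDual quarticDual := by
    have hc : (lam : ℂ) ≠ 0 := by exact_mod_cast hlam
    constructor <;> rintro ⟨z1, z2, w1, w2⟩ _ <;>
      simp [Complex.real_smul, inv_mul_cancel_left₀ hc, mul_inv_cancel_left₀ hc]
  exact Set.InvOn.bijOn hinv (mapsToAux lam) (mapsToAux lam⁻¹)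
end

section
/- Let M ⊆ ℂ⁴ be the set of points (z₁, z₂, w₁, w₂) satisfying Im w₁ = z₁ * conj z₁ (i.e. Im w₁ = |z₁|²) and Im w₂ = 2 * Re(z₂ * conj z₁). Then for every nonzero real λ the map (z₁, z₂, w₁, w₂) ↦ (z₁, λ • z₂, w₁, λ • w₂) maps M bijectively onto M. This gives a one-parameter group of holomorphic automorphisms of M (of weight zero) that are not of the algebraized (S-holomorphic) form. -/
open Complex

/-- The algebraization (over the dual numbers) of the sphere `Im w = z z̄`,
written in coordinates of `ℂ⁴`:
`Im w₁ = z₁ z̄₁` and `Im w₂ = 2 Re(z₂ z̄₁)`. -/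
def sphereDual : Set (ℂ × ℂ × ℂ × ℂ) :=
  {p | p.2.2.1.im = (p.1 * (starRingEnd ℂ) p.1).re ∧
       p.2.2.2.im = 2 * (p.2.1 * (starRingEnd ℂ) p.1).re}

lemma mapsTo_aux (lam : ℝ) :
    Set.MapsTo (fun p : ℂ × ℂ × ℂ × ℂ =>
        (p.1, lam • p.2.1, p.2.2.1, lam • p.2.2.2)) sphereDual sphereDual := by
  rintro ⟨z₁, z₂, w₁, w₂⟩ ⟨h1, h2⟩
  refine ⟨h1, ?_⟩
  simp only [sphereDual, Set.mem_setOf_eq] at h2 ⊢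
  simp [Complex.smul_im, Complex.smul_re, smul_mul_assoc, h2]
  ring

/-- for every nonzero real `λ`, the map
`(z₁, z₂, w₁, w₂) ↦ (z₁, λ z₂, w₁, λ w₂)` is a bijection of the algebraized
sphere onto itself — a one-parameter group of holomorphic automorphisms not of
the algebraized (S-holomorphic) form. -/
theorem stmt19 :
    ∀ lam : ℝ, lam ≠ 0 →
      Set.BijOn (fun p : ℂ × ℂ × ℂ × ℂ =>
          (p.1, lam • p.2.1, p.2.2.1, lam • p.2.2.2))
        sphereDual sphereDual := by
  intro lam hlam
  refine ⟨mapsTo_aux lam, ?_, ?_⟩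
  · rintro ⟨a1, a2, a3, a4⟩ _ ⟨b1, b2, b3, b4⟩ _ h
    simp only [Prod.mk.injEq] at h
    obtain ⟨e1, e2, e3, e4⟩ := h
    have h2 : a2 = b2 := smul_right_injective ℂ hlam e2
    have h4 : a4 = b4 := smul_right_injective ℂ hlam e4
    simp [e1, h2, e3, h4]
  · rintro ⟨z₁, z₂, w₁, w₂⟩ hq
    refine ⟨(z₁, lam⁻¹ • z₂, w₁, lam⁻¹ • w₂), mapsTo_aux lam⁻¹ hq, ?_⟩
    have hc : (lam : ℂ) ≠ 0 := Complex.ofReal_ne_zero.mpr hlam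
    simp [smul_smul, mul_inv_cancel₀ hlam]
    constructor <;> field_simp
end
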